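/- Let G be a finite simple graph with n vertices and m edges and eigenvalues λ₁,…,λₙ of A_α(G). Define the α-energy E_α(G) = Σᵢ |λᵢ − 2αm/n|. Then E_α(G) ≤ √(2(1−α)²mn + α²(n·Z(G) − 4m²)), where Z(G) = Σ_{u} deg(u)². -/

import Mathlib

open Matrix Finset

/-! The eigenvalues of `A_α(G)` have sum `tr A_α = 2αm` and square sum
`tr A_α² = 2(1-α)²m + α²Z(G)`. Their mean is therefore `2αm/n`, and Cauchy–Schwarz against the
constant vector bounds the total absolute deviation from the mean by `√(n Σλᵢ² - (Σλᵢ)²)`. -/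

namespace Matrix.IsHermitian

variable {𝕜 n : Type*} [RCLike 𝕜] [Fintype n] [DecidableEq n] {A : Matrix n n 𝕜}

theorem trace_pow_eq_sum_eigenvalues_pow (hA : A.IsHermitian) (k : ℕ) :
    (A ^ k).trace = ∑ i, (hA.eigenvalues i : 𝕜) ^ k := by
  conv_lhs => rw [hA.spectral_theorem, ← map_pow, Unitary.conjStarAlgAut_apply]
  rw [trace_mul_cycle, Unitary.coe_star_mul_self, one_mul, diagonal_pow, trace_diagonal]
  simp

end Matrix.IsHermitian

theorem sum_abs_sub_mean_le_sqrt {ι : Type*} [Fintype ι] (x : ι → ℝ) :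
    ∑ i, |x i - (∑ j, x j) / Fintype.card ι|
      ≤ √(Fintype.card ι * ∑ i, x i ^ 2 - (∑ i, x i) ^ 2) := by
  set c := (∑ j, x j) / Fintype.card ι
  have hvar : Fintype.card ι * ∑ i, (x i - c) ^ 2
      = Fintype.card ι * ∑ i, x i ^ 2 - (∑ i, x i) ^ 2 := by
    rcases isEmpty_or_nonempty ι with _ | _
    · simp
    · have hc : Fintype.card ι * c = ∑ i, x i := mul_div_cancel₀ _ (by positivity)
      simp only [sub_sq, sum_add_distrib, sum_sub_distrib, ← sum_mul, ← mul_sum, sum_const,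
        card_univ, nsmul_eq_mul]
      linear_combination (Fintype.card ι * c - ∑ i, x i) * hc
  apply Real.le_sqrt_of_sq_le
  calc (∑ i, |x i - c|) ^ 2 ≤ Fintype.card ι * ∑ i, |x i - c| ^ 2 := sq_sum_le_card_mul_sum_sq
    _ = Fintype.card ι * ∑ i, x i ^ 2 - (∑ i, x i) ^ 2 := by simp only [sq_abs, hvar]

namespace SimpleGraph

variable {V : Type*} [Fintype V] (G : SimpleGraph V) [DecidableRel G.Adj] (R : Type*) [CommRing R]

theorem trace_adjMatrix_mul_self : (G.adjMatrix R * G.adjMatrix R).trace = 2 * #G.edgeFinset := by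
  simp only [Matrix.trace, diag_apply, adjMatrix_mul_self_apply_self]
  simpa using congrArg (Nat.cast (R := R)) G.sum_degrees_eq_twice_card_edges

variable [DecidableEq V]

/-- Nikiforov's `A_α(G) = α D(G) + (1 - α) A(G)`. -/
def alphaAdjMatrix (α : R) : Matrix V V R := α • G.degMatrix R + (1 - α) • G.adjMatrix R

theorem trace_degMatrix : (G.degMatrix R).trace = 2 * #G.edgeFinset := by
  rw [degMatrix, trace_diagonal]
  simpa using congrArg (Nat.cast (R := R)) G.sum_degrees_eq_twice_card_edges

theorem trace_degMatrix_mul_self :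
    (G.degMatrix R * G.degMatrix R).trace = ∑ v, (G.degree v : R) ^ 2 := by
  simp [degMatrix, trace_diagonal, sq]

theorem trace_degMatrix_mul_adjMatrix : (G.degMatrix R * G.adjMatrix R).trace = 0 := by
  simp only [Matrix.trace, diag_apply, degMatrix, diagonal_mul, adjMatrix_apply]
  simp

theorem trace_alphaAdjMatrix (α : R) :
    (G.alphaAdjMatrix R α).trace = α * (2 * #G.edgeFinset) := by
  simp [alphaAdjMatrix, trace_degMatrix]

theorem trace_alphaAdjMatrix_sq (α : R) :
    ((G.alphaAdjMatrix R α) ^ 2).trace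
      = 2 * (1 - α) ^ 2 * #G.edgeFinset + α ^ 2 * ∑ v, (G.degree v : R) ^ 2 := by
  simp only [alphaAdjMatrix, sq, add_mul, mul_add, smul_mul_smul_comm, trace_add, trace_smul,
    trace_mul_comm (G.adjMatrix R) (G.degMatrix R), trace_degMatrix_mul_self,
    trace_degMatrix_mul_adjMatrix, trace_adjMatrix_mul_self, smul_eq_mul]
  ring

end SimpleGraph

theorem stmt_17_general {V : Type*} [Fintype V] [DecidableEq V] (G : SimpleGraph V)
    [DecidableRel G.Adj] (α : ℝ)
    (hA : (α • Matrix.diagonal (fun v => (G.degree v : ℝ))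
      + (1 - α) • G.adjMatrix ℝ).IsHermitian) :
    ∑ i, |hA.eigenvalues i - 2 * α * G.edgeFinset.card / Fintype.card V|
      ≤ Real.sqrt (2 * (1 - α) ^ 2 * G.edgeFinset.card * Fintype.card V
          + α ^ 2 * ((Fintype.card V : ℝ) * ∑ u, (G.degree u : ℝ) ^ 2
            - 4 * (G.edgeFinset.card : ℝ) ^ 2)) := by
  have hsum : ∑ i, hA.eigenvalues i = α * (2 * #G.edgeFinset) := by
    simpa using (hA.trace_eq_sum_eigenvalues).symm.trans (G.trace_alphaAdjMatrix ℝ α)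
  have hsq : ∑ i, hA.eigenvalues i ^ 2
      = 2 * (1 - α) ^ 2 * #G.edgeFinset + α ^ 2 * ∑ v, (G.degree v : ℝ) ^ 2 := by
    simpa using (hA.trace_pow_eq_sum_eigenvalues_pow 2).symm.trans (G.trace_alphaAdjMatrix_sq ℝ α)
  convert sum_abs_sub_mean_le_sqrt hA.eigenvalues using 4
  · rw [hsum]; ring
  · rw [hsum, hsq]; ring

theorem stmt_17 {V : Type*} [Fintype V] [DecidableEq V] [Nonempty V] (G : SimpleGraph V)
    [DecidableRel G.Adj] (α : ℝ)
    (hA : (α • Matrix.diagonal (fun v => (G.degree v : ℝ))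
      + (1 - α) • G.adjMatrix ℝ).IsHermitian) :
    ∑ i, |hA.eigenvalues i - 2 * α * G.edgeFinset.card / Fintype.card V|
      ≤ Real.sqrt (2 * (1 - α) ^ 2 * G.edgeFinset.card * Fintype.card V
          + α ^ 2 * ((Fintype.card V : ℝ) * ∑ u, (G.degree u : ℝ) ^ 2
            - 4 * (G.edgeFinset.card : ℝ) ^ 2)) :=
  stmt_17_general G α hA
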